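/- (M-step open-loop recursive feasibility.) Suppose the dynamics are Lipschitz as above, a k-step deadbeat controller exists on a ρ-neighborhood of the time-varying terminal set 𝒳_f(t), and every nominally feasible trajectory ending in 𝒳_f(t) satisfies dist(φ(x,u,0;N+M−k), 𝒳_f(t+M−k)) ≤ σ with σ < ρ. Then there exists δ > 0 (namely δ ≤ (ρ−σ)/σ̃ with σ̃ = L_x^{N−k} Σ_{i=0}^{M−1} L_x^i L_w) such that for any disturbance sequence with ‖w_i‖ ≤ δ for i = 0,…,M, if the problem 𝒫(x,t) is feasible with feasible input ũ_x, then the perturbed trajectory satisfies dist(φ(x,ũ_x,(w^M,0); N+M−k), 𝒳_f(t+M−k)) ≤ ρ, and hence 𝒫(φ(x,ũ_x,w;M), t+M) is feasible. -/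
import Mathlib


/-- k-step composition of the discrete-time system `x⁺ = ψ(x,u,w)`. -/
def flow {X U W : Type*} (ψ : X → U → W → X) (x : X) (u : ℕ → U) (w : ℕ → W) : ℕ → X
  | 0 => x
  | k + 1 => ψ (flow ψ x u w k) (u k) (w k)


lemma flow_congr {X U W : Type*} (ψ : X → U → W → X) (x : X)
    (u u' : ℕ → U) (w w' : ℕ → W) :
    ∀ j, (∀ i < j, u i = u' i) → (∀ i < j, w i = w' i) →
      flow ψ x u w j = flow ψ x u' w' j
  | 0, _, _ => rfl
  | j + 1, hu, hw => by
      simp only [flow]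
      rw [flow_congr ψ x u u' w w' j (fun i hi => hu i (Nat.lt_succ_of_lt hi))
        (fun i hi => hw i (Nat.lt_succ_of_lt hi)), hu j (Nat.lt_succ_self j),
        hw j (Nat.lt_succ_self j)]

lemma flow_add {X U W : Type*} (ψ : X → U → W → X) (x : X) (u : ℕ → U) (w : ℕ → W) (a : ℕ) :
    ∀ b, flow ψ x u w (a + b) =
      flow ψ (flow ψ x u w a) (fun i => u (a + i)) (fun i => w (a + i)) b
  | 0 => rfl
  | b + 1 => by
      rw [Nat.add_succ]
      simp only [flow]
      rw [flow_add ψ x u w a b]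

lemma flow_perturb {n m p : ℕ}
    (ψ : EuclideanSpace ℝ (Fin n) → EuclideanSpace ℝ (Fin m) → EuclideanSpace ℝ (Fin p) →
      EuclideanSpace ℝ (Fin n))
    (Lx Lw : ℝ) (hLx0 : 0 ≤ Lx) (hLw : 0 ≤ Lw)
    (hlipx : ∀ (x' x'' : EuclideanSpace ℝ (Fin n)) (u : EuclideanSpace ℝ (Fin m)),
      ‖ψ x'' u 0 - ψ x' u 0‖ ≤ Lx * ‖x'' - x'‖)
    (hlipw : ∀ (x : EuclideanSpace ℝ (Fin n)) (u : EuclideanSpace ℝ (Fin m))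
      (w : EuclideanSpace ℝ (Fin p)), ‖ψ x u w - ψ x u 0‖ ≤ Lw * ‖w‖)
    (x : EuclideanSpace ℝ (Fin n)) (u : ℕ → EuclideanSpace ℝ (Fin m))
    (w : ℕ → EuclideanSpace ℝ (Fin p)) (δ : ℝ) (hδ : 0 ≤ δ) (hw : ∀ i, ‖w i‖ ≤ δ) :
    ∀ j, ‖flow ψ x u w j - flow ψ x u 0 j‖ ≤ (∑ i ∈ Finset.range j, Lx ^ i * Lw) * δ
  | 0 => by simp [flow]
  | j + 1 => by
      have ih := flow_perturb ψ Lx Lw hLx0 hLw hlipx hlipw x u w δ hδ hw j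
      set a := flow ψ x u w j
      set b := flow ψ x u 0 j
      have h0 : flow ψ x u 0 (j + 1) = ψ b (u j) 0 := rfl
      have h1 : flow ψ x u w (j + 1) = ψ a (u j) (w j) := rfl
      rw [h0, h1]
      have htri : ‖ψ a (u j) (w j) - ψ b (u j) 0‖ ≤
          ‖ψ a (u j) (w j) - ψ a (u j) 0‖ + ‖ψ a (u j) 0 - ψ b (u j) 0‖ :=
        norm_sub_le_norm_sub_add_norm_sub _ _ _
      have h2 : ‖ψ a (u j) (w j) - ψ a (u j) 0‖ ≤ Lw * δ :=
        le_trans (hlipw a (u j) (w j)) (by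
          exact mul_le_mul_of_nonneg_left (hw j) hLw)
      have h3 : ‖ψ a (u j) 0 - ψ b (u j) 0‖ ≤ Lx * ((∑ i ∈ Finset.range j, Lx ^ i * Lw) * δ) :=
        le_trans (hlipx b a (u j)) (mul_le_mul_of_nonneg_left ih hLx0)
      have hsum : (∑ i ∈ Finset.range (j + 1), Lx ^ i * Lw) =
          Lx * (∑ i ∈ Finset.range j, Lx ^ i * Lw) + Lw := by
        rw [Finset.sum_range_succ', Finset.mul_sum]
        simp [pow_succ', mul_assoc]
      rw [hsum]
      nlinarith [htri, h2, h3]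

/-- Proposition 1: M-step open-loop recursive feasibility. -/
theorem M_step_open_loop_recursive_feasibility {n m p : ℕ}
    (ψ : EuclideanSpace ℝ (Fin n) → EuclideanSpace ℝ (Fin m) → EuclideanSpace ℝ (Fin p) →
      EuclideanSpace ℝ (Fin n))
    (Lx Lw : ℝ) (hLx : 1 ≤ Lx) (hLw : 0 ≤ Lw)
    (hlipx : ∀ (x' x'' : EuclideanSpace ℝ (Fin n)) (u : EuclideanSpace ℝ (Fin m)),
      ‖ψ x'' u 0 - ψ x' u 0‖ ≤ Lx * ‖x'' - x'‖)
    (hlipw : ∀ (x : EuclideanSpace ℝ (Fin n)) (u : EuclideanSpace ℝ (Fin m))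
      (w : EuclideanSpace ℝ (Fin p)), ‖ψ x u w - ψ x u 0‖ ≤ Lw * ‖w‖)
    (Uset : Set (EuclideanSpace ℝ (Fin m)))
    (Xf : ℕ → Set (EuclideanSpace ℝ (Fin n)))
    (N k M : ℕ) (hkN : k ≤ N) (hkM : k ≤ M) (hM : 1 ≤ M)
    (ρ σ : ℝ) (hσρ : σ < ρ)
    -- Assumption 2: existence of a k-step deadbeat controller
    (deadbeat : ∀ (t : ℕ) (x : EuclideanSpace ℝ (Fin n)),
      Metric.infDist x (Xf t) ≤ ρ →
      ∃ v : ℕ → EuclideanSpace ℝ (Fin m), (∀ i, v i ∈ Uset) ∧ flow ψ x v 0 k ∈ Xf (t + k))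
    -- Assumption 3: nominal trajectories ending in the terminal set stay σ-close
    (hsigma : ∀ (t : ℕ) (x : EuclideanSpace ℝ (Fin n)) (u : ℕ → EuclideanSpace ℝ (Fin m)),
      (∀ i, u i ∈ Uset) → flow ψ x u 0 N ∈ Xf t →
      Metric.infDist (flow ψ x u 0 (N + M - k)) (Xf (t + M - k)) ≤ σ) :
    ∃ δ > 0, ∀ (t : ℕ) (x : EuclideanSpace ℝ (Fin n))
      (ux : ℕ → EuclideanSpace ℝ (Fin m)) (w : ℕ → EuclideanSpace ℝ (Fin p)),
      (∀ i, ‖w i‖ ≤ δ) →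
      -- ux is a feasible solution of 𝒫(x,t)
      (∀ i, ux i ∈ Uset) → flow ψ x ux 0 N ∈ Xf t →
      -- the perturbed trajectory stays ρ-close to the terminal set …
      Metric.infDist (flow ψ x ux (fun i => if i < M then w i else 0) (N + M - k))
          (Xf (t + M - k)) ≤ ρ ∧
      -- … and hence 𝒫(φ(x,ũ_x,w;M), t+M) is feasible
      ∃ u' : ℕ → EuclideanSpace ℝ (Fin m), (∀ i, u' i ∈ Uset) ∧
        flow ψ (flow ψ x ux w M) u' 0 N ∈ Xf (t + M) := by
  classical
  set J := N + M - k with hJdef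
  set S : ℝ := ∑ i ∈ Finset.range J, Lx ^ i * Lw with hSdef
  have hLx0 : (0:ℝ) ≤ Lx := le_trans zero_le_one hLx
  have hS0 : 0 ≤ S := Finset.sum_nonneg fun i _ => mul_nonneg (pow_nonneg hLx0 i) hLw
  have hS1 : (0:ℝ) < S + 1 := by linarith
  set δ : ℝ := (ρ - σ) / (S + 1) with hδdef
  have hδpos : 0 < δ := div_pos (by linarith) hS1
  refine ⟨δ, hδpos, ?_⟩
  intro t x ux w hw hU hXf
  set w' : ℕ → EuclideanSpace ℝ (Fin p) := fun i => if i < M then w i else 0 with hw'def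
  have hw' : ∀ i, ‖w' i‖ ≤ δ := by
    intro i
    simp only [hw'def]
    split
    · exact hw i
    · simp [le_of_lt hδpos]
  -- the perturbation bound
  have hpert := flow_perturb ψ Lx Lw hLx0 hLw hlipx hlipw x ux w' δ (le_of_lt hδpos) hw' J
  have hnom : Metric.infDist (flow ψ x ux 0 J) (Xf (t + M - k)) ≤ σ := hsigma t x ux hU hXf
  have hSδ : S * δ ≤ ρ - σ := by
    have h1 : (S + 1) * δ = ρ - σ := by
      rw [hδdef]; field_simp
    nlinarith [hδpos.le]
  have hqρ : Metric.infDist (flow ψ x ux w' J) (Xf (t + M - k)) ≤ ρ := by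
    have := Metric.infDist_le_infDist_add_dist (x := flow ψ x ux w' J)
      (y := flow ψ x ux 0 J) (s := Xf (t + M - k))
    rw [dist_eq_norm] at this
    linarith
  refine ⟨hqρ, ?_⟩
  -- rewrite the perturbed point as a nominal flow from the perturbed M-step state
  have hJ : J = M + (N - k) := by omega
  have hq2 : flow ψ x ux w' J =
      flow ψ (flow ψ x ux w M) (fun i => ux (M + i)) 0 (N - k) := by
    rw [hJ, flow_add]
    have e1 : flow ψ x ux w' M = flow ψ x ux w M :=
      flow_congr ψ x ux ux w' w M (fun i _ => rfl)
        (fun i hi => by simp [hw'def, hi])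
    rw [e1]
    exact flow_congr ψ _ _ _ _ _ (N - k) (fun i _ => rfl)
      (fun i _ => by simp [hw'def, Nat.not_lt.mpr (Nat.le_add_right M i)])
  rw [hq2] at hqρ
  obtain ⟨v, hv, hvXf⟩ := deadbeat (t + M - k) _ hqρ
  have ht : t + M - k + k = t + M := by omega
  rw [ht] at hvXf
  set u' : ℕ → EuclideanSpace ℝ (Fin m) :=
    fun i => if i < N - k then ux (M + i) else v (i - (N - k)) with hu'def
  refine ⟨u', fun i => ?_, ?_⟩
  · simp only [hu'def]
    split
    · exact hU _
    · exact hv _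
  · have hN : N = (N - k) + k := by omega
    rw [hN, flow_add]
    have e2 : flow ψ (flow ψ x ux w M) u' 0 (N - k) =
        flow ψ (flow ψ x ux w M) (fun i => ux (M + i)) 0 (N - k) :=
      flow_congr ψ _ _ _ _ _ (N - k) (fun i hi => by simp [hu'def, hi]) (fun i _ => rfl)
    rw [e2]
    have e3 : flow ψ (flow ψ (flow ψ x ux w M) (fun i => ux (M + i)) 0 (N - k))
        (fun i => u' (N - k + i)) (fun i => (0 : ℕ → EuclideanSpace ℝ (Fin p)) (N - k + i)) k =
        flow ψ (flow ψ (flow ψ x ux w M) (fun i => ux (M + i)) 0 (N - k)) v 0 k :=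
      flow_congr ψ _ _ _ _ _ k
        (fun i _ => by simp [hu'def, Nat.not_lt.mpr (Nat.le_add_right (N - k) i)])
        (fun i _ => rfl)
    rw [e3]
    exact hvXf
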